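/- Let W₇ := {A algebraic curvature tensor : A(Jx,y,z,w) = A(x,y,Jz,w) for all x,y,z,w} and let W_G be the set of algebraic curvature tensors satisfying the Gray identity. Then W_G ∩ W₇ = {0}. -/

import Mathlib

/-- An algebraic curvature tensor: a (multilinear) map with the usual symmetries. -/
def IsCurv {V : Type*} [AddCommGroup V] [Module ℝ V]
    (A : V →ₗ[ℝ] V →ₗ[ℝ] V →ₗ[ℝ] V →ₗ[ℝ] ℝ) : Prop :=
  (∀ x y z w, A x y z w = -A y x z w) ∧
  (∀ x y z w, A x y z w = A z w x y) ∧
  (∀ x y z w, A x y z w + A y z x w + A z x y w = 0)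

/-- The Gray identity. -/
def IsGray {V : Type*} [AddCommGroup V] [Module ℝ V] (J : V →ₗ[ℝ] V)
    (A : V →ₗ[ℝ] V →ₗ[ℝ] V →ₗ[ℝ] V →ₗ[ℝ] ℝ) : Prop :=
  ∀ x y z w, A x y z w + A (J x) (J y) (J z) (J w) =
    A (J x) (J y) z w + A x y (J z) (J w) + A (J x) y (J z) w +
    A x (J y) z (J w) + A (J x) y z (J w) + A x (J y) (J z) w

/-!
For `A ∈ W₇` the skew-symmetry in the first pair and the pair symmetry let `J` be moved
from any slot to the third one. Each term of the Gray identity then carries `J` an even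
number of times in the third slot, so with `J² = -1` the identity reads `2A = -6A`.
-/

section MoveJ

variable {V : Type*} [AddCommGroup V] [Module ℝ V] {J : V →ₗ[ℝ] V}
  {A : V →ₗ[ℝ] V →ₗ[ℝ] V →ₗ[ℝ] V →ₗ[ℝ] ℝ}

theorem apply_J_snd_eq (hskew : ∀ x y z w, A x y z w = -A y x z w)
    (hW₇ : ∀ x y z w, A (J x) y z w = A x y (J z) w) (x y z w : V) :
    A x (J y) z w = A x y (J z) w := by
  rw [hskew, hW₇, ← hskew]

theorem apply_J_fourth_eq (hskew : ∀ x y z w, A x y z w = -A y x z w)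
    (hpair : ∀ x y z w, A x y z w = A z w x y)
    (hW₇ : ∀ x y z w, A (J x) y z w = A x y (J z) w) (x y z w : V) :
    A x y z (J w) = A x y (J z) w := by
  rw [hpair, apply_J_snd_eq hskew hW₇, ← hW₇, ← hpair]

theorem eq_zero_of_isGray_of_apply_J_fst_eq (hJ2 : ∀ x, J (J x) = -x) (hA : IsCurv A)
    (hG : IsGray J A) (hW₇ : ∀ x y z w, A (J x) y z w = A x y (J z) w) : A = 0 := by
  obtain ⟨hskew, hpair, -⟩ := hA
  ext x y z w
  have hGray := hG x y z w
  simp only [hW₇, apply_J_snd_eq hskew hW₇, apply_J_fourth_eq hskew hpair hW₇, hJ2, map_neg,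
    LinearMap.neg_apply, neg_neg] at hGray
  simp only [LinearMap.zero_apply]
  linarith

end MoveJ

/-- `W_G ∩ W₇ = {0}`. -/
theorem stmt_17 {V : Type*} [AddCommGroup V] [Module ℝ V]
    (J : V →ₗ[ℝ] V) (hJ2 : ∀ x, J (J x) = -x) :
    {A : V →ₗ[ℝ] V →ₗ[ℝ] V →ₗ[ℝ] V →ₗ[ℝ] ℝ | IsCurv A ∧ IsGray J A} ∩
      {A | IsCurv A ∧ ∀ x y z w, A (J x) y z w = A x y (J z) w} = {0} := by
  ext A
  simp only [Set.mem_inter_iff, Set.mem_ofPred_eq, Set.mem_singleton_iff]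
  constructor
  · rintro ⟨⟨hA, hG⟩, -, hW₇⟩
    exact eq_zero_of_isGray_of_apply_J_fst_eq hJ2 hA hG hW₇
  · rintro rfl
    simp [IsCurv, IsGray]
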